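/- arXiv:1803.03339 — 5 statements merged into one kernel-verified Lean document; each statement's English description precedes it below -/
import Mathlib

section
/- For an odd prime p, integer r ≥ 1, and integers u, k with gcd(u,p)=1, the Euler quotient satisfies Q_r(u + k·p^r) ≡ Q_r(u) − k·p^{r−1}·u^{−1} (mod p^r), where u^{−1} is the inverse of u modulo p^r. -/
/-- The Euler quotient of an integer `u` coprime to `p`, modulo `p^r`:
`(u^(φ(p^r)) - 1) / p^r` (an exact integer division when `gcd(u,p)=1`). -/
def eulerQuotientZ (p r : ℕ) (u : ℤ) : ℤ :=
  (u ^ (p ^ (r - 1) * (p - 1)) - 1) / (p : ℤ) ^ r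

/-! Write `N = φ(p^r)`. Modulo `p^(2r)` the binomial theorem gives
`(u + k p^r)^N ≡ u^N + N u^(N-1) k p^r`, so dividing by `p^r` shifts the Euler quotient by
`N u^(N-1) k`. Modulo `p^r` we have `N = p^r - p^(r-1) ≡ -p^(r-1)`, and Euler's theorem
`u^N ≡ 1` makes `u^(N-1)` the inverse `w` of `u`. -/

open scoped Nat

theorem Int.ModEq.pow_totient {x : ℤ} {n : ℕ} (h : IsCoprime x n) : x ^ φ n ≡ 1 [ZMOD n] := by
  have hx : IsUnit (x : ZMod n) := (ZMod.coe_int_isUnit_iff_isCoprime x n).mpr h.symm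
  rw [← ZMod.intCast_eq_intCast_iff, Int.cast_pow, Int.cast_one, ← hx.unit_spec,
    ← Units.val_pow_eq_pow_val, ZMod.pow_totient, Units.val_one]

theorem Int.add_mul_pow_sub_one_ediv_modEq {q u : ℤ} (k : ℤ) (n : ℕ) (hq : q ≠ 0)
    (hdvd : q ∣ u ^ n - 1) :
    ((u + k * q) ^ n - 1) / q ≡ (u ^ n - 1) / q + n * u ^ (n - 1) * k [ZMOD q] := by
  obtain ⟨a, ha⟩ := hdvd
  obtain ⟨t, ht⟩ := sq_dvd_add_pow_sub_sub (k * q) u n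
  have hexpand : (u + k * q) ^ n - 1 = q * (a + n * u ^ (n - 1) * k + q * (k ^ 2 * t)) := by
    linear_combination ht + ha
  rw [hexpand, ha, Int.mul_ediv_cancel_left _ hq, Int.mul_ediv_cancel_left _ hq]
  exact Int.modEq_iff_dvd.mpr ⟨-(k ^ 2 * t), by ring⟩

theorem Int.ModEq.pow_pred_of_mul_modEq_one {q u w : ℤ} {n : ℕ} (hn : n ≠ 0)
    (hpow : u ^ n ≡ 1 [ZMOD q]) (hw : u * w ≡ 1 [ZMOD q]) : u ^ (n - 1) ≡ w [ZMOD q] :=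
  calc u ^ (n - 1) ≡ u ^ (n - 1) * (u * w) [ZMOD q] := by
        simpa using hw.symm.mul_left (u ^ (n - 1))
    _ = u ^ n * w := by
        rw [← mul_assoc, ← pow_succ, Nat.sub_add_cancel (Nat.one_le_iff_ne_zero.mpr hn)]
    _ ≡ w [ZMOD q] := by simpa using hpow.mul_right w

theorem Int.pow_pred_mul_sub_one_modEq {a : ℤ} {r : ℕ} (hr : r ≠ 0) :
    a ^ (r - 1) * (a - 1) ≡ -a ^ (r - 1) [ZMOD a ^ r] := by
  obtain ⟨s, rfl⟩ := Nat.exists_eq_succ_of_ne_zero hr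
  exact Int.modEq_iff_dvd.mpr ⟨-1, by rw [Nat.succ_sub_one, pow_succ]; ring⟩

theorem euler_quotient_shift_general (p : ℕ) (hp : p.Prime)
    (r : ℕ) (hr : 1 ≤ r) (u k w : ℤ) (hu : Int.gcd u p = 1)
    (hw : u * w ≡ 1 [ZMOD ((p : ℤ) ^ r)]) :
    eulerQuotientZ p r (u + k * (p : ℤ) ^ r) ≡
      eulerQuotientZ p r u - k * (p : ℤ) ^ (r - 1) * w [ZMOD ((p : ℤ) ^ r)] := by
  have htot : φ (p ^ r) = p ^ (r - 1) * (p - 1) := Nat.totient_prime_pow hp hr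
  have heuler : u ^ φ (p ^ r) ≡ 1 [ZMOD (p : ℤ) ^ r] := by
    simpa using Int.ModEq.pow_totient (x := u) (n := p ^ r)
      (by simpa using (Int.isCoprime_iff_gcd_eq_one.mpr hu).pow_right)
  have htot_modEq : (φ (p ^ r) : ℤ) ≡ -(p : ℤ) ^ (r - 1) [ZMOD (p : ℤ) ^ r] := by
    rw [htot, Nat.cast_mul, Nat.cast_sub hp.one_le, Nat.cast_pow, Nat.cast_one]
    exact Int.pow_pred_mul_sub_one_modEq (by omega)
  have hinv : u ^ (φ (p ^ r) - 1) ≡ w [ZMOD (p : ℤ) ^ r] :=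
    heuler.pow_pred_of_mul_modEq_one (Nat.totient_pos.mpr (pow_pos hp.pos r)).ne' hw
  unfold eulerQuotientZ
  rw [← htot]
  calc _ ≡ (u ^ φ (p ^ r) - 1) / (p : ℤ) ^ r + φ (p ^ r) * u ^ (φ (p ^ r) - 1) * k
          [ZMOD (p : ℤ) ^ r] :=
        Int.add_mul_pow_sub_one_ediv_modEq k _ (pow_ne_zero _ (by exact_mod_cast hp.ne_zero))
          heuler.symm.dvd
    _ ≡ (u ^ φ (p ^ r) - 1) / (p : ℤ) ^ r + -(p : ℤ) ^ (r - 1) * w * k [ZMOD (p : ℤ) ^ r] := by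
        gcongr
    _ = _ := by ring

theorem euler_quotient_shift (p : ℕ) (hp : p.Prime) (hodd : Odd p)
    (r : ℕ) (hr : 1 ≤ r) (u k w : ℤ) (hu : Int.gcd u p = 1)
    (hw : u * w ≡ 1 [ZMOD ((p : ℤ) ^ r)]) :
    eulerQuotientZ p r (u + k * (p : ℤ) ^ r) ≡
      eulerQuotientZ p r u - k * (p : ℤ) ^ (r - 1) * w [ZMOD ((p : ℤ) ^ r)] :=
  euler_quotient_shift_general p hp r hr u k w hu hw
end

section
/- For an odd prime p and r ≥ 1, the map u ↦ Q_r(u) defines a surjective group homomorphism from the unit group (Z/p^{r+1}Z)^* to the additive group Z/p^rZ. -/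
open Finset

/-- The Euler quotient modulo `p^r` of a natural number `u` coprime to `p`, as the
canonical representative in `{0, ..., p^r - 1}`:
`((u^(φ(p^r)) - 1) / p^r) mod p^r`. -/
def eulerQuotient (p r u : ℕ) : ℕ :=
  ((u ^ (p ^ (r - 1) * (p - 1)) - 1) / p ^ r) % p ^ r

/-- One extra power of `p` per `p`-th power. -/
lemma eq_step_dvd {p : ℕ} {a b : ℤ} {s : ℕ}
    (h1 : (p : ℤ) ∣ a - b) (hs : (p : ℤ) ^ s ∣ a - b) :
    (p : ℤ) ^ (s + 1) ∣ a ^ p - b ^ p := by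
  have key : (∑ i ∈ range p, a ^ i * b ^ (p - 1 - i)) * (a - b) = a ^ p - b ^ p :=
    geom_sum₂_mul a b p
  have hab : ((a : ZMod p)) = ((b : ZMod p)) := by
    have h0 : ((a - b : ℤ) : ZMod p) = 0 := (ZMod.intCast_zmod_eq_zero_iff_dvd _ p).mpr h1
    push_cast at h0
    exact sub_eq_zero.mp h0
  have hsum : (p : ℤ) ∣ ∑ i ∈ range p, a ^ i * b ^ (p - 1 - i) := by
    have h0 : ((∑ i ∈ range p, a ^ i * b ^ (p - 1 - i) : ℤ) : ZMod p) = 0 := by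
      push_cast
      rw [hab]
      have he : ∀ i ∈ range p, ((b : ℤ) : ZMod p) ^ i * ((b : ℤ) : ZMod p) ^ (p - 1 - i)
          = ((b : ℤ) : ZMod p) ^ (p - 1) := by
        intro i hi
        rw [← pow_add]
        congr 1
        have := mem_range.mp hi
        omega
      rw [Finset.sum_congr rfl he, Finset.sum_const, card_range]
      simp [nsmul_eq_mul]
    exact (ZMod.intCast_zmod_eq_zero_iff_dvd _ p).mp h0
  rw [← key, pow_succ, mul_comm ((p : ℤ) ^ s)]
  exact mul_dvd_mul hsum hs

lemma eq_iterate_dvd {p : ℕ} {a b : ℤ} {s : ℕ} (hs1 : 1 ≤ s)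
    (h : (p : ℤ) ^ s ∣ a - b) (k : ℕ) : (p : ℤ) ^ (s + k) ∣ a ^ p ^ k - b ^ p ^ k := by
  induction k with
  | zero => simpa using h
  | succ k ih =>
    have h1 : (p : ℤ) ∣ a ^ p ^ k - b ^ p ^ k :=
      dvd_trans (dvd_pow_self (p : ℤ) (by omega : s + k ≠ 0)) ih
    have hstep := eq_step_dvd h1 ih
    have e : ∀ x : ℤ, x ^ p ^ (k + 1) = (x ^ p ^ k) ^ p := fun x => by
      rw [pow_succ, pow_mul]
    rw [e a, e b]
    exact hstep

lemma eq_binom_dvd {p : ℕ} (hp : p.Prime) (hp3 : 3 ≤ p) {s : ℕ} (hs : 1 ≤ s) (c : ℤ) :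
    (p : ℤ) ^ (s + 2) ∣ (1 + (p : ℤ) ^ s * c) ^ p - (1 + (p : ℤ) ^ (s + 1) * c) := by
  set X : ℤ := (p : ℤ) ^ s * c with hX
  have hid : (X + 1) ^ p = ∑ k ∈ range (p + 1), X ^ k * 1 ^ (p - k) * (p.choose k : ℤ) :=
    add_pow X 1 p
  have hsplit : (∑ k ∈ Ico 0 2, X ^ k * 1 ^ (p - k) * (p.choose k : ℤ))
      + ∑ k ∈ Ico 2 (p + 1), X ^ k * 1 ^ (p - k) * (p.choose k : ℤ)
      = ∑ k ∈ Ico 0 (p + 1), X ^ k * 1 ^ (p - k) * (p.choose k : ℤ) :=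
    Finset.sum_Ico_consecutive _ (by omega) (by omega)
  have hhead : (∑ k ∈ Ico 0 2, X ^ k * 1 ^ (p - k) * (p.choose k : ℤ)) = 1 + (p : ℤ) * X := by
    rw [show Ico 0 2 = range 2 by rw [Finset.range_eq_Ico]]
    rw [Finset.sum_range_succ, Finset.sum_range_one]
    simp [Nat.choose_one_right]
    ring
  have htail : (p : ℤ) ^ (s + 2) ∣ ∑ k ∈ Ico 2 (p + 1), X ^ k * 1 ^ (p - k) * (p.choose k : ℤ) := by
    refine Finset.dvd_sum ?_
    intro k hk
    obtain ⟨hk2, hkp⟩ := mem_Ico.mp hk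
    have hXk : (p : ℤ) ^ (s * k) ∣ X ^ k := by
      rw [hX, mul_pow, ← pow_mul]
      exact dvd_mul_right _ _
    rcases eq_or_lt_of_le (show k ≤ p by omega) with hkeq | hklt
    · have h1 : (p : ℤ) ^ (s + 2) ∣ (p : ℤ) ^ (s * k) := pow_dvd_pow _ (by nlinarith)
      exact dvd_mul_of_dvd_left (dvd_mul_of_dvd_left (h1.trans hXk) _) _
    · have hc : (p : ℤ) ∣ (p.choose k : ℤ) :=
        Int.natCast_dvd_natCast.mpr (Nat.Prime.dvd_choose_self hp (by omega) hklt)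
      have h1 : (p : ℤ) ^ (s + 1) ∣ (p : ℤ) ^ (s * k) := pow_dvd_pow _ (by nlinarith)
      have := mul_dvd_mul ((h1.trans hXk).mul_right ((1 : ℤ) ^ (p - k))) hc
      rwa [← pow_succ] at this
  have hfinal : (1 + X) ^ p - (1 + (p : ℤ) ^ (s + 1) * c)
      = ∑ k ∈ Ico 2 (p + 1), X ^ k * 1 ^ (p - k) * (p.choose k : ℤ) := by
    have h1 : (1 + X) ^ p = (X + 1) ^ p := by ring
    rw [h1, hid, Finset.range_eq_Ico, ← hsplit, hhead, hX]
    ring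
  rw [hfinal]
  exact htail

/-- `(1+p)^(p^k) ≡ 1 + p^(k+1) mod p^(k+2)`. -/
lemma eq_one_add_p_pow {p : ℕ} (hp : p.Prime) (hp3 : 3 ≤ p) (k : ℕ) :
    (p : ℤ) ^ (k + 2) ∣ (1 + (p : ℤ)) ^ p ^ k - (1 + (p : ℤ) ^ (k + 1)) := by
  induction k with
  | zero => simp
  | succ k ih =>
    obtain ⟨e, he⟩ := ih
    have hb := eq_binom_dvd hp hp3 (show 1 ≤ k + 1 by omega) (1 + (p : ℤ) * e)
    obtain ⟨d, hd⟩ := hb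
    have e1 : (1 + (p : ℤ)) ^ p ^ (k + 1) = ((1 + (p : ℤ)) ^ p ^ k) ^ p := by
      rw [pow_succ, pow_mul]
    have e2 : (1 + (p : ℤ)) ^ p ^ k = 1 + (p : ℤ) ^ (k + 1) * (1 + (p : ℤ) * e) := by
      have hpk : (p : ℤ) ^ (k + 2) = (p : ℤ) ^ (k + 1) * p := by rw [pow_succ]
      linear_combination he + e * hpk
    refine ⟨d + e, ?_⟩
    rw [e1, e2]
    have hpk3 : (p : ℤ) ^ (k + 1 + 2) = (p : ℤ) ^ (k + 2) * p := by rw [pow_succ]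
    have hpk2 : (p : ℤ) ^ (k + 2) = (p : ℤ) ^ (k + 1) * p := by rw [pow_succ]
    linear_combination hd + e * hpk3 + hpk2 * (1 + (p:ℤ)*e) - hpk2
  
lemma eq_one_add_pow (x : ℤ) (n : ℕ) : x ^ 2 ∣ (1 + x) ^ n - (1 + n * x) := by
  induction n with
  | zero => simp
  | succ n ih =>
    obtain ⟨d, hd⟩ := ih
    refine ⟨d * (1 + x) + n, ?_⟩
    push_cast
    linear_combination (1 + x) * hd

lemma eulerQuotient_lt {p r : ℕ} (hp : p.Prime) (u : ℕ) : eulerQuotient p r u < p ^ r :=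
  Nat.mod_lt _ (pow_pos hp.pos r)

/-- Structure of `u^N` in terms of the Euler quotient. -/
lemma eq_eulerQuotient_structure {p r : ℕ} (hp : p.Prime) (hr : 1 ≤ r) {u : ℕ}
    (hu : Nat.Coprime u p) :
    ∃ m, u ^ (p ^ (r - 1) * (p - 1)) = 1 + p ^ r * eulerQuotient p r u + p ^ (2 * r) * m := by
  have hcop : Nat.Coprime u (p ^ r) := hu.pow_right r
  have heu : u ^ (p ^ (r - 1) * (p - 1)) ≡ 1 [MOD p ^ r] := by
    have h := Nat.ModEq.pow_totient hcop
    rwa [Nat.totient_prime_pow hp hr] at h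
  have hu1 : 1 ≤ u := Nat.pos_of_ne_zero (by
    rintro rfl
    exact hp.one_lt.ne' ((Nat.coprime_zero_left p).mp hu))
  have h1 : 1 ≤ u ^ (p ^ (r - 1) * (p - 1)) := Nat.one_le_pow _ _ hu1
  have hdvd : p ^ r ∣ u ^ (p ^ (r - 1) * (p - 1)) - 1 := (Nat.modEq_iff_dvd' h1).mp heu.symm
  obtain ⟨q0, hq0⟩ := hdvd
  refine ⟨q0 / p ^ r, ?_⟩
  have hq : eulerQuotient p r u = q0 % p ^ r := by
    unfold eulerQuotient
    rw [hq0, Nat.mul_div_cancel_left _ (pow_pos hp.pos r)]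
  have h2 : u ^ (p ^ (r - 1) * (p - 1)) = 1 + p ^ r * q0 := by omega
  have h3 : q0 = p ^ r * (q0 / p ^ r) + q0 % p ^ r := (Nat.div_add_mod q0 (p ^ r)).symm
  rw [h2, hq, two_mul, pow_add]
  conv_lhs => rw [h3]
  ring

lemma eq_cast_structure {p r : ℕ} (hp : p.Prime) (hr : 1 ≤ r) {u : ℕ}
    (hu : Nat.Coprime u p) :
    ((u : ZMod (p ^ (2 * r)))) ^ (p ^ (r - 1) * (p - 1))
      = 1 + (p : ZMod (p ^ (2 * r))) ^ r * (eulerQuotient p r u : ZMod (p ^ (2 * r))) := by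
  obtain ⟨m, hm⟩ := eq_eulerQuotient_structure hp hr hu
  have h := congrArg (Nat.cast : ℕ → ZMod (p ^ (2 * r))) hm
  push_cast at h
  have hz : ((p : ZMod (p ^ (2 * r)))) ^ (2 * r) = 0 := by
    rw [← Nat.cast_pow, ZMod.natCast_self]
  rw [h, hz]
  ring

lemma eq_cancel {p r : ℕ} (hp : p.Prime) {a b : ℕ}
    (h : ((p ^ r * a : ℕ) : ZMod (p ^ (2 * r))) = ((p ^ r * b : ℕ) : ZMod (p ^ (2 * r)))) :
    ((a : ZMod (p ^ r)) = (b : ZMod (p ^ r))) := by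
  rw [ZMod.natCast_eq_natCast_iff] at h ⊢
  rw [show 2 * r = r + r by omega, pow_add] at h
  exact Nat.ModEq.mul_left_cancel' (pow_pos hp.pos r).ne' h

/-- Well-definedness of the Euler quotient modulo `p^(r+1)`. -/
lemma eq_well_defined {p r : ℕ} (hp : p.Prime) (hr : 1 ≤ r) {u v : ℕ}
    (hu : Nat.Coprime u p) (hv : Nat.Coprime v p)
    (huv : (u : ZMod (p ^ (r + 1))) = v) :
    ((eulerQuotient p r u : ZMod (p ^ r)) = eulerQuotient p r v) := by
  have h1 : ((p : ℤ)) ^ (r + 1) ∣ (u : ℤ) - v := by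
    have hmod := (ZMod.natCast_eq_natCast_iff u v _).mp huv
    have hd := Nat.ModEq.dvd hmod
    push_cast at hd
    exact (dvd_sub_comm).mp hd
  have h2 := eq_iterate_dvd (show 1 ≤ r + 1 by omega) h1 (r - 1)
  rw [show r + 1 + (r - 1) = 2 * r by omega] at h2
  have h3 : (p : ℤ) ^ (2 * r) ∣ ((u : ℤ) ^ p ^ (r - 1)) ^ (p - 1) - ((v : ℤ) ^ p ^ (r - 1)) ^ (p - 1) :=
    h2.trans (sub_dvd_pow_sub_pow _ _ (p - 1))
  rw [← pow_mul, ← pow_mul] at h3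
  have h4 : ((u : ZMod (p ^ (2 * r)))) ^ (p ^ (r - 1) * (p - 1))
      = ((v : ZMod (p ^ (2 * r)))) ^ (p ^ (r - 1) * (p - 1)) := by
    have h0 : (((u : ℤ) ^ (p ^ (r - 1) * (p - 1)) - (v : ℤ) ^ (p ^ (r - 1) * (p - 1)) : ℤ)
        : ZMod (p ^ (2 * r))) = 0 := by
      rw [ZMod.intCast_zmod_eq_zero_iff_dvd]
      push_cast
      exact h3
    push_cast at h0
    exact sub_eq_zero.mp h0
  rw [eq_cast_structure hp hr hu, eq_cast_structure hp hr hv] at h4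
  have h5 := add_left_cancel h4
  apply eq_cancel hp
  push_cast
  exact h5

/-- Additivity of the Euler quotient. -/
lemma eq_additive {p r : ℕ} (hp : p.Prime) (hr : 1 ≤ r) {u v : ℕ}
    (hu : Nat.Coprime u p) (hv : Nat.Coprime v p) :
    ((eulerQuotient p r (u * v) : ZMod (p ^ r))
      = eulerQuotient p r u + eulerQuotient p r v) := by
  have huv : Nat.Coprime (u * v) p := Nat.Coprime.mul hu hv
  have h1 := eq_cast_structure hp hr huv
  have hmul : (((u * v : ℕ)) : ZMod (p ^ (2 * r))) ^ (p ^ (r - 1) * (p - 1))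
      = ((u : ZMod (p ^ (2 * r)))) ^ (p ^ (r - 1) * (p - 1))
        * ((v : ZMod (p ^ (2 * r)))) ^ (p ^ (r - 1) * (p - 1)) := by
    push_cast
    rw [mul_pow]
  rw [hmul, eq_cast_structure hp hr hu, eq_cast_structure hp hr hv] at h1
  have hz : ((p : ZMod (p ^ (2 * r)))) ^ r * ((p : ZMod (p ^ (2 * r)))) ^ r = 0 := by
    rw [← pow_add, ← two_mul, ← Nat.cast_pow, ZMod.natCast_self]
  have h2 : ((p ^ r * (eulerQuotient p r u + eulerQuotient p r v) : ℕ) : ZMod (p ^ (2 * r)))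
      = ((p ^ r * eulerQuotient p r (u * v) : ℕ) : ZMod (p ^ (2 * r))) := by
    push_cast
    linear_combination h1 - ((eulerQuotient p r u : ZMod (p ^ (2 * r)))
      * (eulerQuotient p r v : ZMod (p ^ (2 * r)))) * hz
  have h6 := eq_cancel hp h2
  push_cast at h6
  exact h6.symm

/-- The Euler quotient of `1 + p` is not divisible by `p`. -/
lemma eq_not_dvd_eulerQuotient {p r : ℕ} (hp : p.Prime) (hp3 : 3 ≤ p) (hr : 1 ≤ r) :
    ¬ p ∣ eulerQuotient p r (1 + p) := by
  intro hdvd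
  have hcop : Nat.Coprime (1 + p) p :=
    Nat.coprime_add_self_left.mpr (Nat.coprime_one_left p)
  obtain ⟨m, hm⟩ := eq_eulerQuotient_structure hp hr hcop
  set Q : ℕ := eulerQuotient p r (1 + p) with hQdef
  have hmz : ((1 : ℤ) + p) ^ (p ^ (r - 1) * (p - 1))
      = 1 + (p : ℤ) ^ r * Q + (p : ℤ) ^ (2 * r) * m := by
    have h := congrArg (Nat.cast : ℕ → ℤ) hm
    push_cast at h
    exact h
  obtain ⟨e, he⟩ := eq_one_add_p_pow hp hp3 (r - 1)
  rw [show r - 1 + 2 = r + 1 by omega, show r - 1 + 1 = r by omega] at he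
  obtain ⟨d, hd⟩ := eq_one_add_pow ((p : ℤ) ^ r * (1 + (p : ℤ) * e)) (p - 1)
  have hxr1 : (p : ℤ) ^ (r + 1) = (p : ℤ) ^ r * p := by rw [pow_succ]
  have hPy : (p : ℤ) ^ r = (p : ℤ) ^ (r - 1) * p := by
    rw [← pow_succ]
    congr 1
    omega
  have hx2r : (p : ℤ) ^ (2 * r) = (p : ℤ) ^ r * (p : ℤ) ^ r := by
    rw [← pow_add]
    congr 1
    omega
  have hA : ((1 : ℤ) + p) ^ (p ^ (r - 1) * (p - 1)) = (((1 : ℤ) + p) ^ p ^ (r - 1)) ^ (p - 1) :=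
    pow_mul _ _ _
  have hAX : ((1 : ℤ) + p) ^ p ^ (r - 1) = 1 + (p : ℤ) ^ r * (1 + (p : ℤ) * e) := by
    linear_combination he + e * hxr1
  rw [hA, hAX] at hmz
  have hp1 : ((p - 1 : ℕ) : ℤ) = (p : ℤ) - 1 := by
    have h1 : (1 : ℕ) ≤ p := hp.one_le
    push_cast [h1]
    ring
  rw [hp1] at hd
  have hPne : ((p : ℤ) ^ r) ≠ 0 := pow_ne_zero r (by exact_mod_cast hp.pos.ne')
  have key : (p : ℤ) ^ r * ((Q : ℤ) - ((p : ℤ) - 1))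
      = (p : ℤ) ^ r * ((p : ℤ) * (((p : ℤ) - 1) * e
        + (p : ℤ) ^ (r - 1) * ((1 + (p : ℤ) * e) ^ 2 * d - m))) := by
    linear_combination hd - hmz - (m : ℤ) * hx2r
      - (p : ℤ) ^ r * ((m : ℤ) - (1 + (p : ℤ) * e) ^ 2 * d) * hPy
  have hcancel := mul_left_cancel₀ hPne key
  obtain ⟨q, hq⟩ : (p : ℤ) ∣ (Q : ℤ) := Int.natCast_dvd_natCast.mpr hdvd
  have hfin : (p : ℤ) ∣ 1 := by
    refine ⟨1 - q + (((p : ℤ) - 1) * e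
        + (p : ℤ) ^ (r - 1) * ((1 + (p : ℤ) * e) ^ 2 * d - m)), ?_⟩
    linear_combination hcancel - hq
  have hle : (p : ℤ) ≤ 1 := Int.le_of_dvd one_pos hfin
  have : p ≤ 1 := by exact_mod_cast hle
  omega

theorem euler_quotient_hom_surjective (p : ℕ) (hp : p.Prime) (hodd : Odd p)
    (r : ℕ) (hr : 1 ≤ r) :
    ∃ f : (ZMod (p ^ (r + 1)))ˣ → ZMod (p ^ r),
      Function.Surjective f ∧
      (∀ a b : (ZMod (p ^ (r + 1)))ˣ, f (a * b) = f a + f b) ∧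
      (∀ (u : ℕ) (h : Nat.Coprime u (p ^ (r + 1))),
        f (ZMod.unitOfCoprime u h) = (eulerQuotient p r u : ZMod (p ^ r))) := by
  haveI : NeZero (p ^ (r + 1)) := ⟨(pow_pos hp.pos (r + 1)).ne'⟩
  haveI : NeZero (p ^ r) := ⟨(pow_pos hp.pos r).ne'⟩
  have hp3 : 3 ≤ p := by
    have h2 := hp.two_le
    have ho := Nat.odd_iff.mp hodd
    omega
  set f : (ZMod (p ^ (r + 1)))ˣ → ZMod (p ^ r) :=
    fun a => ((eulerQuotient p r (ZMod.val (a : ZMod (p ^ (r + 1)))) : ℕ) : ZMod (p ^ r))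
    with hf
  have hcop_val : ∀ a : (ZMod (p ^ (r + 1)))ˣ,
      Nat.Coprime (ZMod.val (a : ZMod (p ^ (r + 1)))) p := by
    intro a
    have h := ZMod.val_coe_unit_coprime a
    exact Nat.Coprime.coprime_dvd_right (dvd_pow_self p (Nat.succ_ne_zero r)) h
  have hcast_val : ∀ a : (ZMod (p ^ (r + 1)))ˣ,
      ((ZMod.val (a : ZMod (p ^ (r + 1))) : ℕ) : ZMod (p ^ (r + 1)))
        = (a : ZMod (p ^ (r + 1))) :=
    fun a => ZMod.natCast_rightInverse _
  -- the specification on unitOfCoprime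
  have key3 : ∀ (u : ℕ) (h : Nat.Coprime u (p ^ (r + 1))),
      f (ZMod.unitOfCoprime u h) = (eulerQuotient p r u : ZMod (p ^ r)) := by
    intro u h
    have hu : Nat.Coprime u p :=
      Nat.Coprime.coprime_dvd_right (dvd_pow_self p (Nat.succ_ne_zero r)) h
    refine eq_well_defined hp hr (hcop_val _) hu ?_
    rw [hcast_val]
    rw [ZMod.coe_unitOfCoprime]
  -- additivity
  have key2 : ∀ a b : (ZMod (p ^ (r + 1)))ˣ, f (a * b) = f a + f b := by
    intro a b
    have hab : ((ZMod.val ((a * b : (ZMod (p ^ (r + 1)))ˣ) : ZMod (p ^ (r + 1))) : ℕ)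
        : ZMod (p ^ (r + 1)))
        = ((ZMod.val (a : ZMod (p ^ (r + 1))) * ZMod.val (b : ZMod (p ^ (r + 1))) : ℕ)
          : ZMod (p ^ (r + 1))) := by
      rw [hcast_val, Nat.cast_mul, hcast_val, hcast_val, Units.val_mul]
    have h1 : f (a * b) = ((eulerQuotient p r
        (ZMod.val (a : ZMod (p ^ (r + 1))) * ZMod.val (b : ZMod (p ^ (r + 1)))) : ℕ)
        : ZMod (p ^ r)) :=
      eq_well_defined hp hr (hcop_val _) ((hcop_val a).mul (hcop_val b)) hab
    rw [h1]
    exact eq_additive hp hr (hcop_val a) (hcop_val b)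
  -- f 1 = 0 and power law
  have hone : f 1 = 0 := by
    have h := key2 1 1
    rw [mul_one] at h
    exact left_eq_add.mp h
  have hpow : ∀ (a : (ZMod (p ^ (r + 1)))ˣ) (k : ℕ), f (a ^ k) = k • f a := by
    intro a k
    induction k with
    | zero => simpa using hone
    | succ k ih => rw [pow_succ, key2, ih, succ_nsmul]
  have hgcop : Nat.Coprime (1 + p) (p ^ (r + 1)) :=
    (Nat.coprime_add_self_left.mpr (Nat.coprime_one_left p)).pow_right _
  set g := ZMod.unitOfCoprime (1 + p) hgcop with hg
  have hfg : f g = ((eulerQuotient p r (1 + p) : ℕ) : ZMod (p ^ r)) := key3 _ _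
  have hQnd := eq_not_dvd_eulerQuotient hp hp3 hr
  have hQcop : Nat.Coprime (eulerQuotient p r (1 + p)) (p ^ r) :=
    Nat.Coprime.pow_right _
      (Nat.coprime_comm.mp ((Nat.Prime.coprime_iff_not_dvd hp).mpr hQnd))
  set Qu := ZMod.unitOfCoprime _ hQcop with hQu
  have hsurj : Function.Surjective f := by
    intro t
    refine ⟨g ^ (ZMod.val (t * ((Qu⁻¹ : (ZMod (p ^ r))ˣ) : ZMod (p ^ r)))), ?_⟩
    rw [hpow, hfg]
    have hco : ((eulerQuotient p r (1 + p) : ℕ) : ZMod (p ^ r)) = (Qu : ZMod (p ^ r)) :=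
      (ZMod.coe_unitOfCoprime _ _).symm
    rw [hco, nsmul_eq_mul, ZMod.natCast_rightInverse _]
    exact Units.inv_mul_cancel_right t Qu
  exact ⟨f, hsurj, key2, key3⟩
end

section
/- For an odd prime p and r ≥ 1, each level set D_l = {u : 0 ≤ u < p^{r+1}, gcd(u,p)=1, Q_r(u) = l} has exactly p−1 elements, for every l with 0 ≤ l < p^r. -/
/-- The level set `D_l^{(p^{r+1})} = {u : 0 ≤ u < p^{r+1}, gcd(u,p)=1, Q_r(u)=l}`. -/
def levelSet (p r l : ℕ) : Finset ℕ :=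
  (Finset.range (p ^ (r + 1))).filter (fun u => Nat.Coprime u p ∧ eulerQuotient p r u = l)

/-!
Reduced mod `p^r`, the Euler quotient `u ↦ (u^φ - 1)/p^r` turns products into sums, and by
lifting the exponent it depends only on `u` mod `p^(r+1)` and is a unit at `u = 1 + p`. So it is
a surjective homomorphism from `(ℤ/p^(r+1))ˣ` onto `ℤ/p^r`: multiplication by a suitable unit
maps any level set injectively into any other, hence the `p^r` level sets, which partition the
`p^r (p - 1)` units, all have the same size.
-/

open Finset

theorem Int.pow_add_dvd_pow_sub_pow {p : ℕ} (hp : p.Prime) (hodd : Odd p) {x y : ℤ}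
    {a b n : ℕ} (ha : 1 ≤ a) (hxy : (p : ℤ) ^ a ∣ x - y) (hx : ¬(p : ℤ) ∣ x)
    (hn : p ^ b ∣ n) : (p : ℤ) ^ (a + b) ∣ x ^ n - y ^ n := by
  rw [pow_dvd_iff_le_emultiplicity,
    Int.emultiplicity_pow_sub_pow hp hodd ((dvd_pow_self _ (by omega)).trans hxy) hx]
  push_cast
  exact add_le_add (le_emultiplicity_of_pow_dvd hxy) (le_emultiplicity_of_pow_dvd hn)

section EulerQuotient

variable {p r : ℕ}

theorem not_pow_succ_dvd_one_add_pow_sub_one (hp : p.Prime) (hodd : Odd p) (hr : 1 ≤ r) :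
    ¬p ^ (r + 1) ∣ (1 + p) ^ (p ^ (r - 1) * (p - 1)) - 1 := by
  have hp1 : ¬p ∣ p - 1 :=
    Nat.not_dvd_of_pos_of_lt (by have := hp.two_le; omega) (by have := hp.pos; omega)
  have hval : emultiplicity p ((1 + p) ^ (p ^ (r - 1) * (p - 1)) - 1 ^ (p ^ (r - 1) * (p - 1)))
      = r := by
    rw [Nat.emultiplicity_pow_sub_pow hp hodd (by simp)
        (by simpa [Nat.dvd_add_left] using hp.one_lt.ne'),
      Nat.add_sub_cancel_left, hp.emultiplicity_mul, hp.emultiplicity_self,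
      hp.emultiplicity_pow_self, emultiplicity_eq_zero.mpr hp1]
    norm_cast; omega
  rw [one_pow] at hval
  rw [← emultiplicity_lt_iff_not_dvd, hval]
  exact_mod_cast Nat.lt_succ_self r

theorem pow_eq_one_add_mul_div (hp : p.Prime) (hr : 1 ≤ r) {u : ℕ} (hu : u.Coprime p) :
    u ^ (p ^ (r - 1) * (p - 1)) = 1 + p ^ r * ((u ^ (p ^ (r - 1) * (p - 1)) - 1) / p ^ r) := by
  have heuler := Nat.ModEq.pow_totient (hu.pow_right r)
  rw [Nat.totient_prime_pow hp hr] at heuler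
  have hpos : 1 ≤ u ^ (p ^ (r - 1) * (p - 1)) :=
    Nat.one_le_pow _ _ (Nat.pos_of_ne_zero (by rintro rfl; simp [hp.ne_one] at hu))
  rw [Nat.mul_div_cancel' ((Nat.modEq_iff_dvd' hpos).mp heuler.symm)]
  omega

theorem natCast_eulerQuotient (u : ℕ) : (eulerQuotient p r u : ZMod (p ^ r)) =
    ((u ^ (p ^ (r - 1) * (p - 1)) - 1) / p ^ r : ℕ) :=
  ZMod.natCast_mod _ _

theorem natCast_eulerQuotient_mul (hp : p.Prime) (hr : 1 ≤ r) {u v : ℕ} (hu : u.Coprime p)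
    (hv : v.Coprime p) : (eulerQuotient p r (u * v) : ZMod (p ^ r)) =
      eulerQuotient p r u + eulerQuotient p r v := by
  have hu' := pow_eq_one_add_mul_div hp hr hu
  have hv' := pow_eq_one_add_mul_div hp hr hv
  simp only [natCast_eulerQuotient, mul_pow]
  generalize (u ^ (p ^ (r - 1) * (p - 1)) - 1) / p ^ r = a at hu' ⊢
  generalize (v ^ (p ^ (r - 1) * (p - 1)) - 1) / p ^ r = b at hv' ⊢
  have hprod : (1 + p ^ r * a) * (1 + p ^ r * b) - 1 = p ^ r * (a + b + p ^ r * (a * b)) :=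
    Nat.sub_eq_of_eq_add (by ring)
  rw [hu', hv', hprod, Nat.mul_div_cancel_left _ (pow_pos hp.pos r)]
  simp only [Nat.cast_add, Nat.cast_mul, ZMod.natCast_self, zero_mul, add_zero]

theorem natCast_eulerQuotient_pow (hp : p.Prime) (hr : 1 ≤ r) {u : ℕ} (hu : u.Coprime p)
    (k : ℕ) : (eulerQuotient p r (u ^ k) : ZMod (p ^ r)) = k * eulerQuotient p r u := by
  induction k with
  | zero => simp [eulerQuotient]
  | succ k ih =>
    rw [pow_succ, natCast_eulerQuotient_mul hp hr (hu.pow_left k) hu, ih]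
    push_cast
    ring

theorem natCast_eulerQuotient_eq_of_modEq (hp : p.Prime) (hodd : Odd p) (hr : 1 ≤ r)
    {u v : ℕ} (hu : u.Coprime p) (hv : v.Coprime p) (huv : u ≡ v [MOD p ^ (r + 1)]) :
    (eulerQuotient p r u : ZMod (p ^ r)) = eulerQuotient p r v := by
  have hu' := pow_eq_one_add_mul_div hp hr hu
  have hv' := pow_eq_one_add_mul_div hp hr hv
  rw [natCast_eulerQuotient, natCast_eulerQuotient, ZMod.natCast_eq_natCast_iff,
    Nat.modEq_iff_dvd]
  have hvp : ¬(p : ℤ) ∣ v := by exact_mod_cast (hp.coprime_iff_not_dvd.mp hv.symm)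
  have hdiff : (p : ℤ) ^ (r + 1 + (r - 1)) ∣ (v : ℤ) ^ (p ^ (r - 1) * (p - 1)) -
      (u : ℤ) ^ (p ^ (r - 1) * (p - 1)) :=
    Int.pow_add_dvd_pow_sub_pow hp hodd (by omega) (by exact_mod_cast Nat.modEq_iff_dvd.mp huv)
      hvp (dvd_mul_right _ _)
  generalize (u ^ (p ^ (r - 1) * (p - 1)) - 1) / p ^ r = a at hu' ⊢
  generalize (v ^ (p ^ (r - 1) * (p - 1)) - 1) / p ^ r = b at hv' ⊢
  rw [show r + 1 + (r - 1) = r + r by omega, pow_add] at hdiff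
  rw [(by exact_mod_cast hu' : (u : ℤ) ^ (p ^ (r - 1) * (p - 1)) = 1 + p ^ r * a),
    (by exact_mod_cast hv' : (v : ℤ) ^ (p ^ (r - 1) * (p - 1)) = 1 + p ^ r * b),
    show (1 + (p : ℤ) ^ r * b) - (1 + p ^ r * a) = p ^ r * (b - a) by ring] at hdiff
  push_cast
  exact (mul_dvd_mul_iff_left (pow_ne_zero _ (by exact_mod_cast hp.ne_zero))).mp hdiff

theorem isUnit_natCast_eulerQuotient_one_add (hp : p.Prime) (hodd : Odd p) (hr : 1 ≤ r) :
    IsUnit (eulerQuotient p r (1 + p) : ZMod (p ^ r)) := by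
  rw [ZMod.isUnit_iff_coprime]
  refine Nat.Coprime.pow_right _ ((hp.coprime_iff_not_dvd.mpr fun hdvd => ?_).symm)
  have hcop : (1 + p).Coprime p := by simp
  rw [eulerQuotient, Nat.dvd_mod_iff (dvd_pow_self p (by omega))] at hdvd
  refine not_pow_succ_dvd_one_add_pow_sub_one hp hodd hr ?_
  rw [pow_eq_one_add_mul_div hp hr hcop, Nat.add_sub_cancel_left, pow_succ]
  exact mul_dvd_mul_left _ hdvd

theorem exists_coprime_natCast_eulerQuotient_eq (hp : p.Prime) (hodd : Odd p) (hr : 1 ≤ r)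
    (a : ZMod (p ^ r)) : ∃ w, w.Coprime p ∧ (eulerQuotient p r w : ZMod (p ^ r)) = a := by
  have : NeZero (p ^ r) := ⟨pow_ne_zero _ hp.ne_zero⟩
  set c := (eulerQuotient p r (1 + p) : ZMod (p ^ r))
  refine ⟨(1 + p) ^ (c⁻¹ * a).val, Nat.Coprime.pow_left _ (by simp), ?_⟩
  rw [natCast_eulerQuotient_pow hp hr (by simp), ZMod.natCast_zmod_val, mul_right_comm,
    ZMod.inv_mul_of_unit c (isUnit_natCast_eulerQuotient_one_add hp hodd hr), one_mul]

end EulerQuotient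

theorem mem_levelSet_iff {p r l u : ℕ} (hl : l < p ^ r) : u ∈ levelSet p r l ↔
    u < p ^ (r + 1) ∧ u.Coprime p ∧ (eulerQuotient p r u : ZMod (p ^ r)) = l := by
  rw [levelSet, mem_filter, mem_range, ZMod.natCast_eq_natCast_iff', eulerQuotient,
    Nat.mod_mod, Nat.mod_eq_of_lt hl]

theorem card_levelSet_le {p r l₁ l₂ : ℕ} (hp : p.Prime) (hodd : Odd p) (hr : 1 ≤ r)
    (hl₁ : l₁ < p ^ r) (hl₂ : l₂ < p ^ r) : #(levelSet p r l₁) ≤ #(levelSet p r l₂) := by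
  obtain ⟨w, hw, hQw⟩ := exists_coprime_natCast_eulerQuotient_eq hp hodd hr (l₂ - l₁)
  refine card_le_card_of_injOn (fun u => u * w % p ^ (r + 1)) (fun u hu => ?_)
    (fun u₁ hu₁ u₂ hu₂ hmod => ?_)
  · obtain ⟨-, hu, hQu⟩ := (mem_levelSet_iff hl₁).mp hu
    have hcop : (u * w).Coprime p := hu.mul_left hw
    have hcop' : (u * w % p ^ (r + 1)).Coprime p :=
      (((Nat.mod_modEq _ _).of_dvd (dvd_pow_self p r.succ_ne_zero)).gcd_eq).trans hcop
    refine (mem_levelSet_iff hl₂).mpr ⟨Nat.mod_lt _ (pow_pos hp.pos _), hcop', ?_⟩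
    rw [natCast_eulerQuotient_eq_of_modEq hp hodd hr hcop' hcop (Nat.mod_modEq _ _),
      natCast_eulerQuotient_mul hp hr hu hw, hQu, hQw, add_sub_cancel]
  · obtain ⟨hu₁, -⟩ := mem_filter.mp hu₁
    obtain ⟨hu₂, -⟩ := mem_filter.mp hu₂
    exact (Nat.ModEq.cancel_right_of_coprime (hw.pow_right (r + 1)).symm hmod).eq_of_lt_of_lt
      (mem_range.mp hu₁) (mem_range.mp hu₂)

theorem sum_card_levelSet {p : ℕ} (hp : p.Prime) (r : ℕ) :
    ∑ l ∈ range (p ^ r), #(levelSet p r l) = p ^ r * (p - 1) := by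
  calc ∑ l ∈ range (p ^ r), #(levelSet p r l)
      = #{u ∈ range (p ^ (r + 1)) | u.Coprime p} := by
        rw [card_eq_sum_card_fiberwise (f := eulerQuotient p r) (t := range (p ^ r))
          (fun u _ => mem_range.mpr (Nat.mod_lt _ (pow_pos hp.pos r)))]
        simp only [filter_filter]
        rfl
    _ = (p ^ (r + 1)).totient := by
        rw [Nat.totient_eq_card_coprime]
        refine congrArg card (filter_congr fun u _ => ?_)
        rw [Nat.coprime_comm, Nat.coprime_pow_left_iff r.succ_pos]
    _ = p ^ r * (p - 1) := Nat.totient_prime_pow_succ hp r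

theorem levelSet_card (p : ℕ) (hp : p.Prime) (hodd : Odd p)
    (r : ℕ) (hr : 1 ≤ r) (l : ℕ) (hl : l < p ^ r) :
    (levelSet p r l).card = p - 1 := by
  have hsum := sum_card_levelSet hp r
  rw [sum_congr rfl fun l' hl' =>
      (card_levelSet_le hp hodd hr (mem_range.mp hl') hl).antisymm
        (card_levelSet_le hp hodd hr hl (mem_range.mp hl')),
    sum_const, card_range, smul_eq_mul] at hsum
  exact Nat.eq_of_mul_eq_mul_left (pow_pos hp.pos r) hsum
end

section
/- For an odd prime p, there exists a primitive root g modulo p^{r+1} (for any r ≥ 1) such that Q_r(g) = 1, i.e., (g^{φ(p^r)} − 1)/p^r ≡ 1 (mod p^r). -/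
open Finset


lemma aux_L2 (A : ℤ) (k : ℕ) : A ^ 2 ∣ (1 + A) ^ k - (1 + k * A) := by
  induction k with
  | zero => simp
  | succ k ih =>
    have h : (1 + A) ^ (k + 1) - (1 + (k + 1 : ℕ) * A)
        = ((1 + A) ^ k - (1 + k * A)) * (1 + A) + k * A ^ 2 := by push_cast; ring
    rw [h]
    exact dvd_add (ih.mul_right _) (Dvd.dvd.mul_left (dvd_refl _) _)

lemma aux_pow_p (p : ℕ) (hp : p.Prime) {a b : ℤ} {s : ℕ} (hs : 1 ≤ s)
    (h : (p : ℤ) ^ s ∣ a - b) : (p : ℤ) ^ (s + 1) ∣ a ^ p - b ^ p := by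
  haveI : Fact p.Prime := ⟨hp⟩
  have hgeom : (∑ i ∈ range p, a ^ i * b ^ (p - 1 - i)) * (a - b) = a ^ p - b ^ p :=
    geom_sum₂_mul a b p
  have hab : (a : ZMod p) = (b : ZMod p) := by
    have hpd : (p : ℤ) ∣ a - b := dvd_trans (dvd_pow_self _ (by omega)) h
    have := (ZMod.intCast_zmod_eq_zero_iff_dvd (a - b) p).mpr hpd
    push_cast at this
    linear_combination this
  have hS : (p : ℤ) ∣ ∑ i ∈ range p, a ^ i * b ^ (p - 1 - i) := by
    have : ((∑ i ∈ range p, a ^ i * b ^ (p - 1 - i) : ℤ) : ZMod p) = 0 := by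
      push_cast
      have hc : ∀ i ∈ range p, (a : ZMod p) ^ i * (b : ZMod p) ^ (p - 1 - i)
          = (b : ZMod p) ^ (p - 1) := by
        intro i hi
        rw [hab, ← pow_add, show i + (p - 1 - i) = p - 1 from by
          have := Finset.mem_range.mp hi; omega]
      rw [Finset.sum_congr rfl hc, Finset.sum_const, Finset.card_range]
      simp [CharP.cast_eq_zero]
    exact_mod_cast (ZMod.intCast_zmod_eq_zero_iff_dvd _ p).mp this
  rw [← hgeom, pow_succ, mul_comm ((p:ℤ)^s)]
  exact mul_dvd_mul hS h

lemma aux_pow_pj (p : ℕ) (hp : p.Prime) {a b : ℤ} {s : ℕ} (hs : 1 ≤ s) (j : ℕ)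
    (h : (p : ℤ) ^ s ∣ a - b) : (p : ℤ) ^ (s + j) ∣ a ^ p ^ j - b ^ p ^ j := by
  induction j with
  | zero => simpa using h
  | succ j ih =>
    have step := aux_pow_p p hp (s := s + j) (by omega) ih
    have e1 : a ^ p ^ (j + 1) = (a ^ p ^ j) ^ p := by rw [pow_succ, pow_mul]
    have e2 : b ^ p ^ (j + 1) = (b ^ p ^ j) ^ p := by rw [pow_succ, pow_mul]
    rw [e1, e2, show s + (j + 1) = s + j + 1 by omega]
    exact step

lemma aux_step (p : ℕ) (hp : p.Prime) (hodd : Odd p) {x : ℤ} {s : ℕ} (hs : 1 ≤ s)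
    (h : (p : ℤ) ^ (s + 1) ∣ x - (1 + (p : ℤ) ^ s)) :
    (p : ℤ) ^ (s + 2) ∣ x ^ p - (1 + (p : ℤ) ^ (s + 1)) := by
  obtain ⟨d, hd⟩ : ∃ d, p = 2 * d + 1 := by
    obtain ⟨t, ht⟩ := hodd; exact ⟨t, by omega⟩
  set A : ℤ := x - 1 with hA_def
  have hA1 : (p : ℤ) ^ (s + 1) ∣ A - (p : ℤ) ^ s := by
    have : A - (p : ℤ) ^ s = x - (1 + (p : ℤ) ^ s) := by rw [hA_def]; ring
    rw [this]; exact h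
  have hA : (p : ℤ) ^ s ∣ A := by
    have h1 : (p : ℤ) ^ s ∣ A - (p : ℤ) ^ s :=
      (pow_dvd_pow (p : ℤ) (by omega)).trans hA1
    have := dvd_add h1 (dvd_refl ((p : ℤ) ^ s))
    simpa using this
  obtain ⟨a', hA'⟩ := hA
  -- Gauss sum
  have hg : (∑ i ∈ range p, i) * 2 = p * (p - 1) := Finset.sum_range_id_mul_two p
  have hsumn : (∑ i ∈ range p, i) = p * d := by
    have h2 : p * (p - 1) = (p * d) * 2 := by rw [show p - 1 = 2 * d from by omega]; ring
    exact Nat.eq_of_mul_eq_mul_right (by norm_num) (hg.trans h2)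
  have hsum : (∑ i ∈ range p, (i : ℤ)) = (p : ℤ) * d := by
    have := congrArg (Nat.cast : ℕ → ℤ) hsumn
    push_cast at this; exact this
  set Sg : ℤ := ∑ i ∈ range p, x ^ i with hSg
  have hR : A ^ 2 ∣ Sg - ((p : ℤ) + ((p : ℤ) * d) * A) := by
    have hconst : ∑ i ∈ range p, ((1 : ℤ) + (i : ℤ) * A) = (p : ℤ) + ((p : ℤ) * d) * A := by
      rw [Finset.sum_add_distrib, Finset.sum_const, card_range, ← Finset.sum_mul, hsum]
      push_cast; ring
    have hsplit : Sg - ((p : ℤ) + ((p : ℤ) * d) * A)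
        = ∑ i ∈ range p, (x ^ i - (1 + (i : ℤ) * A)) := by
      rw [Finset.sum_sub_distrib, hconst]
    rw [hsplit]
    apply Finset.dvd_sum
    intro i _
    have hx1 : x = 1 + A := by rw [hA_def]; ring
    rw [hx1]
    exact aux_L2 A i
  obtain ⟨w, hw⟩ := hR
  have h1 : x ^ p - 1 = Sg * A := by
    have := geom_sum_mul x p
    rw [← hA_def] at this
    exact this.symm
  have hkey : x ^ p - (1 + (p : ℤ) ^ (s + 1))
      = (p : ℤ) * (A - (p : ℤ) ^ s) + ((p : ℤ) * d) * A ^ 2 + A ^ 3 * w := by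
    linear_combination h1 + A * hw
  rw [hkey]
  refine dvd_add (dvd_add ?_ ?_) ?_
  · have e : ((p : ℤ)) ^ (s + 2) = (p : ℤ) * (p : ℤ) ^ (s + 1) := by ring
    rw [e]; exact mul_dvd_mul_left _ hA1
  · have e : ((p : ℤ) * d) * A ^ 2 = (p : ℤ) ^ (2 * s + 1) * ((d : ℤ) * a' ^ 2) := by
      rw [hA']; ring
    rw [e]
    exact (pow_dvd_pow (p : ℤ) (by omega)).trans (dvd_mul_right _ _)
  · have e : A ^ 3 * w = (p : ℤ) ^ (3 * s) * (a' ^ 3 * w) := by rw [hA']; ring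
    rw [e]
    exact (pow_dvd_pow (p : ℤ) (by omega)).trans (dvd_mul_right _ _)

lemma aux_onep (p : ℕ) (hp : p.Prime) (hodd : Odd p) (j : ℕ) :
    (p : ℤ) ^ (j + 2) ∣ (1 + (p : ℤ)) ^ p ^ j - (1 + (p : ℤ) ^ (j + 1)) := by
  induction j with
  | zero => simp
  | succ j ih =>
    have step := aux_step p hp hodd (x := (1 + (p : ℤ)) ^ p ^ j) (s := j + 1) (by omega) ih
    have e : ((1 + (p : ℤ)) ^ p ^ j) ^ p = (1 + (p : ℤ)) ^ p ^ (j + 1) := by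
      rw [← pow_mul, ← pow_succ]
    rw [e] at step
    exact step

lemma exists_generator_prime_pow (p : ℕ) (hp : p.Prime) (hodd : Odd p) (r : ℕ) (hr : 1 ≤ r) :
    ∃ z : (ZMod (p ^ (r + 1)))ˣ, ∀ x, x ∈ Subgroup.zpowers z := by
  haveI : Fact p.Prime := ⟨hp⟩
  have hp1 : 1 < p := hp.one_lt
  haveI : NeZero (p ^ (r + 1)) := ⟨by positivity⟩
  have hcard : Fintype.card (ZMod (p ^ (r + 1)))ˣ = p ^ r * (p - 1) := by
    rw [ZMod.card_units_eq_totient, Nat.totient_prime_pow hp (by omega)]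
    simp
  -- the element 1 + p, of order p^r
  have hv_cop : Nat.Coprime (1 + p) (p ^ (r + 1)) := by
    apply Nat.Coprime.pow_right
    apply Nat.coprime_of_mul_modEq_one 1
    show ((1 + p) * 1) % p = 1 % p
    simp [Nat.add_mod]
  set v : (ZMod (p ^ (r + 1)))ˣ := ZMod.unitOfCoprime _ hv_cop with hv_def
  have hv_coe : (v : ZMod (p ^ (r + 1))) = ((1 + (p : ℤ) : ℤ) : ZMod (p ^ (r + 1))) := by
    rw [hv_def, ZMod.coe_unitOfCoprime]
    push_cast
    ring
  have hvr : v ^ p ^ r = 1 := by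
    apply Units.ext
    rw [Units.val_pow_eq_pow_val, hv_coe, Units.val_one, ← Int.cast_pow]
    have h1 := aux_onep p hp hodd r
    have h2 : ((p : ℤ)) ^ (r + 1) ∣ (1 : ℤ) - (1 + (p : ℤ) ^ (r + 1)) := by
      simpa using (dvd_refl ((p : ℤ) ^ (r + 1))).neg_right
    have h3 : ((p : ℤ)) ^ (r + 1) ∣ (1 + (p : ℤ) ^ (r + 1)) - (1 + (p : ℤ)) ^ p ^ r := by
      have := (pow_dvd_pow (p : ℤ) (by omega : r + 1 ≤ r + 2)).trans h1
      simpa using this.neg_right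
    have := dvd_add h2 h3
    have e : ((1 : ℤ) - (1 + (p : ℤ) ^ (r + 1))) + ((1 + (p : ℤ) ^ (r + 1)) - (1 + (p : ℤ)) ^ p ^ r)
        = 1 - (1 + (p : ℤ)) ^ p ^ r := by ring
    rw [e] at this
    have := (ZMod.intCast_eq_intCast_iff_dvd_sub ((1 + (p:ℤ)) ^ p ^ r) 1 (p ^ (r+1))).mpr
      (by exact_mod_cast this)
    exact_mod_cast this
  have hvr' : v ^ p ^ (r - 1) ≠ 1 := by
    intro heq
    have hcoe : ((1 + (p : ℤ)) ^ p ^ (r - 1) : ℤ) = ((1 : ℤ) : ZMod (p ^ (r + 1))) := by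
      have := congrArg (Units.val) heq
      rw [Units.val_pow_eq_pow_val, hv_coe, Units.val_one] at this
      push_cast at this ⊢
      exact this
    rw [ZMod.intCast_eq_intCast_iff_dvd_sub] at hcoe
    have h1 := aux_onep p hp hodd (r - 1)
    rw [show r - 1 + 2 = r + 1 from by omega, show r - 1 + 1 = r from by omega] at h1
    have h2 : ((p : ℤ)) ^ (r + 1) ∣ ((1 + (p : ℤ)) ^ p ^ (r - 1) - 1) := by
      have h2' := hcoe.neg_right
      rw [neg_sub] at h2'
      exact_mod_cast h2'
    have h3 : ((p : ℤ)) ^ (r + 1) ∣ ((p : ℤ) ^ r) := by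
      have := dvd_sub h2 h1
      have e : ((1 + (p : ℤ)) ^ p ^ (r - 1) - 1)
          - ((1 + (p : ℤ)) ^ p ^ (r - 1) - (1 + (p : ℤ) ^ r)) = (p : ℤ) ^ r := by ring
      rwa [e] at this
    have h4 : (p : ℕ) ^ (r + 1) ∣ p ^ r := by exact_mod_cast h3
    have h5 := Nat.le_of_dvd (by positivity) h4
    have h6 : (p : ℕ) ^ r < p ^ (r + 1) := Nat.pow_lt_pow_right hp1 (by omega)
    omega
  have hordv : orderOf v = p ^ r := by
    have h1 : orderOf v ∣ p ^ r := orderOf_dvd_of_pow_eq_one hvr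
    obtain ⟨i, hile, hi⟩ := (Nat.dvd_prime_pow hp).mp h1
    rcases Nat.lt_or_ge i r with hlt | hge
    · exfalso
      apply hvr'
      apply orderOf_dvd_iff_pow_eq_one.mp
      rw [hi]
      exact pow_dvd_pow p (by omega)
    · rw [hi]; congr 1; omega
  -- element of order p - 1
  have hdvdp : p ∣ p ^ (r + 1) := dvd_pow_self p (by omega)
  obtain ⟨c, hc⟩ := IsCyclic.exists_generator (α := (ZMod p)ˣ)
  have hordc : orderOf c = p - 1 := by
    rw [orderOf_eq_card_of_forall_mem_zpowers hc, Nat.card_eq_fintype_card, ZMod.card_units]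
  obtain ⟨y, hy⟩ := ZMod.unitsMap_surjective hdvdp c
  set w := y ^ p ^ r with hw_def
  have hw1 : w ^ (p - 1) = 1 := by
    rw [hw_def, ← pow_mul, ← hcard]
    exact pow_card_eq_one
  have hcop_p1_pr : Nat.Coprime (p - 1) (p ^ r) := by
    apply Nat.Coprime.pow_right
    apply Nat.coprime_of_mul_modEq_one (p - 1)
    obtain ⟨q, rfl⟩ : ∃ q, p = q + 2 := ⟨p - 2, by omega⟩
    show ((q + 2 - 1) * (q + 2 - 1)) % (q + 2) = 1 % (q + 2)
    rw [show (q + 2 - 1) * (q + 2 - 1) = (q + 2) * q + 1 from by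
      simp only [show q + 2 - 1 = q + 1 from rfl]; ring, Nat.mul_add_mod]
  have hordw : orderOf w = p - 1 := by
    have hd1 : orderOf w ∣ p - 1 := orderOf_dvd_of_pow_eq_one hw1
    have hmapw : ZMod.unitsMap hdvdp w = c ^ p ^ r := by
      rw [hw_def, map_pow, hy]
    have hordmap : orderOf (ZMod.unitsMap hdvdp w) = p - 1 := by
      rw [hmapw, orderOf_pow, hordc, Nat.Coprime.gcd_eq_one hcop_p1_pr, Nat.div_one]
    have hd2 : p - 1 ∣ orderOf w := by
      rw [← hordmap]; exact orderOf_map_dvd _ _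
    exact Nat.dvd_antisymm hd1 hd2
  -- product
  refine ⟨v * w, ?_⟩
  have hcop2 : Nat.Coprime (p ^ r) (p - 1) := hcop_p1_pr.symm
  have hord : orderOf (v * w) = p ^ r * (p - 1) := by
    rw [(Commute.all v w).orderOf_mul_eq_mul_orderOf_of_coprime
      (by rw [hordv, hordw]; exact hcop2), hordv, hordw]
  have htop : Subgroup.zpowers (v * w) = ⊤ := by
    apply Subgroup.eq_top_of_card_eq
    rw [Nat.card_zpowers, hord, Nat.card_eq_fintype_card, hcard]
  intro x
  rw [htop]
  exact Subgroup.mem_top x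

theorem exists_primitive_root_eulerQuotient_one (p : ℕ) (hp : p.Prime) (hodd : Odd p)
    (r : ℕ) (hr : 1 ≤ r) :
    ∃ (g : ℕ) (hg : Nat.Coprime g (p ^ (r + 1))), g < p ^ (r + 1) ∧
      (∀ x : (ZMod (p ^ (r + 1)))ˣ, x ∈ Subgroup.zpowers (ZMod.unitOfCoprime g hg)) ∧
      eulerQuotient p r g = 1 := by
  haveI : Fact p.Prime := ⟨hp⟩
  have hp1 : 1 < p := hp.one_lt
  haveI : NeZero (p ^ (r + 1)) := ⟨by positivity⟩
  have hM1 : 1 < p ^ (r + 1) := Nat.one_lt_pow (by omega) hp1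
  have hm1 : 1 < p ^ r := Nat.one_lt_pow (by omega) hp1
  have hcard : Fintype.card (ZMod (p ^ (r + 1)))ˣ = p ^ r * (p - 1) := by
    rw [ZMod.card_units_eq_totient, Nat.totient_prime_pow hp (by omega)]
    simp
  obtain ⟨z, hz⟩ := exists_generator_prime_pow p hp hodd r hr
  have hordz : orderOf z = p ^ r * (p - 1) := by
    rw [orderOf_eq_card_of_forall_mem_zpowers hz, Nat.card_eq_fintype_card, hcard]
  set h : ℕ := (z : ZMod (p ^ (r + 1))).val with hh
  have hco : Nat.Coprime h (p ^ (r + 1)) := ZMod.val_coe_unit_coprime z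
  have hcast : ((h : ℕ) : ZMod (p ^ (r + 1))) = (z : ZMod (p ^ (r + 1))) :=
    ZMod.natCast_zmod_val _
  have hφpos : 0 < p ^ (r - 1) * (p - 1) := by
    have : 0 < p - 1 := by omega
    positivity
  have hcop_hm : Nat.Coprime h (p ^ r) :=
    hco.coprime_dvd_right (pow_dvd_pow p (by omega))
  have hpos_h : 0 < h := by
    rcases Nat.eq_zero_or_pos h with h0 | h0
    · rw [h0] at hco
      simp [Nat.coprime_zero_left] at hco
      omega
    · exact h0
  have he : h ^ (p ^ (r - 1) * (p - 1)) ≡ 1 [MOD p ^ r] := by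
    have := Nat.ModEq.pow_totient hcop_hm
    rwa [Nat.totient_prime_pow hp (by omega), show r - 1 = r - 1 from rfl] at this
  have hd : p ^ r ∣ h ^ (p ^ (r - 1) * (p - 1)) - 1 :=
    (Nat.modEq_iff_dvd' (Nat.one_le_pow _ _ hpos_h)).mp he.symm
  set a := (h ^ (p ^ (r - 1) * (p - 1)) - 1) / p ^ r with ha_def
  have ha : p ^ r * a = h ^ (p ^ (r - 1) * (p - 1)) - 1 := Nat.mul_div_cancel' hd
  -- a is not divisible by p
  have hz1 : z ^ (p ^ (r - 1) * (p - 1)) ≠ 1 := by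
    intro h1
    have hdvd := orderOf_dvd_of_pow_eq_one h1
    rw [hordz] at hdvd
    have hle := Nat.le_of_dvd hφpos hdvd
    have h2 : p ^ (r - 1) < p ^ r := Nat.pow_lt_pow_right hp1 (by omega)
    have h3 : p ^ r * (p - 1) ≤ p ^ (r - 1) * (p - 1) := hle
    have h4 : p ^ r ≤ p ^ (r - 1) := Nat.le_of_mul_le_mul_right h3 (by omega)
    omega
  have hnM : ¬ (h ^ (p ^ (r - 1) * (p - 1)) ≡ 1 [MOD p ^ (r + 1)]) := by
    intro hmod
    apply hz1
    apply Units.ext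
    have h1 : ((h ^ (p ^ (r - 1) * (p - 1)) : ℕ) : ZMod (p ^ (r + 1)))
        = ((1 : ℕ) : ZMod (p ^ (r + 1))) := (ZMod.natCast_eq_natCast_iff _ _ _).mpr hmod
    push_cast at h1
    rw [hcast] at h1
    rw [Units.val_pow_eq_pow_val, Units.val_one]
    exact h1
  have hpa : ¬ p ∣ a := by
    intro hpdvd
    apply hnM
    obtain ⟨a', hpe⟩ := hpdvd
    have hMd : p ^ (r + 1) ∣ h ^ (p ^ (r - 1) * (p - 1)) - 1 :=
      ⟨a', by rw [← ha, hpe]; ring⟩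
    exact ((Nat.modEq_iff_dvd' (Nat.one_le_pow _ _ hpos_h)).mpr hMd).symm
  have hcopam : Nat.Coprime a (p ^ r) :=
    (((Nat.Prime.coprime_iff_not_dvd hp).mpr hpa).symm).pow_right r
  haveI : NeZero (p ^ r) := ⟨by positivity⟩
  set b := ((a : ZMod (p ^ r))⁻¹).val with hb_def
  have hab : a * b ≡ 1 [MOD p ^ r] := by
    have h1 : ((a * b : ℕ) : ZMod (p ^ r)) = ((1 : ℕ) : ZMod (p ^ r)) := by
      push_cast
      rw [hb_def, ZMod.natCast_zmod_val]
      exact ZMod.coe_mul_inv_eq_one a hcopam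
    exact (ZMod.natCast_eq_natCast_iff _ _ _).mp h1
  have hcop_m_p1 : Nat.Coprime (p ^ r) (p - 1) := by
    apply Nat.Coprime.pow_left
    apply Nat.coprime_of_mul_modEq_one 1
    set q := p - 1 with hq
    show (p * 1) % q = 1 % q
    rw [mul_one, show p = 1 + q from by omega]
    exact Nat.add_mod_right 1 q
  obtain ⟨k, hk1, hk2⟩ := Nat.chineseRemainder hcop_m_p1 b 1
  have hk_p : Nat.Coprime k p := by
    apply Nat.coprime_of_mul_modEq_one a
    calc k * a ≡ b * a [MOD p] :=
          Nat.ModEq.mul_right a (hk1.of_dvd (dvd_pow_self p (by omega)))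
      _ ≡ 1 [MOD p] := by
          rw [mul_comm]
          exact hab.of_dvd (dvd_pow_self p (by omega))
  have hk_p1 : Nat.Coprime k (p - 1) :=
    Nat.coprime_of_mul_modEq_one 1 (by simpa using hk2)
  have hck : Nat.Coprime k (p ^ r * (p - 1)) := (hk_p.pow_right r).mul_right hk_p1
  have hordzk : orderOf (z ^ k) = p ^ r * (p - 1) := by
    rw [orderOf_pow, hordz, Nat.Coprime.gcd_eq_one hck.symm, Nat.div_one]
  have hgen : ∀ x : (ZMod (p ^ (r + 1)))ˣ, x ∈ Subgroup.zpowers (z ^ k) := by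
    have htop : Subgroup.zpowers (z ^ k) = ⊤ := by
      apply Subgroup.eq_top_of_card_eq
      rw [Nat.card_zpowers, hordzk, Nat.card_eq_fintype_card, hcard]
    intro x
    rw [htop]
    exact Subgroup.mem_top x
  -- the natural number g
  set g := h ^ k % p ^ (r + 1) with hg_def
  have hgmod : g ≡ h ^ k [MOD p ^ (r + 1)] := Nat.mod_modEq _ _
  have hgco : Nat.Coprime g (p ^ (r + 1)) := by
    have h1 : Nat.Coprime (h ^ k) (p ^ (r + 1)) := hco.pow_left k
    have h2 : Nat.gcd (h ^ k % p ^ (r + 1)) (p ^ (r + 1)) = Nat.gcd (p ^ (r + 1)) (h ^ k) :=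
      (Nat.gcd_rec (p ^ (r + 1)) (h ^ k)).symm
    unfold Nat.Coprime
    rw [hg_def, h2, Nat.gcd_comm]
    exact h1
  have hglt : g < p ^ (r + 1) := Nat.mod_lt _ (by omega)
  refine ⟨g, hgco, hglt, ?_, ?_⟩
  · -- primitive root
    have hunit : ZMod.unitOfCoprime g hgco = z ^ k := by
      apply Units.ext
      rw [ZMod.coe_unitOfCoprime, hg_def, ZMod.natCast_mod]
      push_cast
      rw [hcast]
    intro x
    rw [hunit]
    exact hgen x
  · -- Euler quotient
    have hgco_m : Nat.Coprime g (p ^ r) := hgco.coprime_dvd_right (pow_dvd_pow p (by omega))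
    have hpos_g : 0 < g := by
      rcases Nat.eq_zero_or_pos g with h0 | h0
      · rw [h0] at hgco
        simp [Nat.coprime_zero_left] at hgco
        omega
      · exact h0
    have heg : g ^ (p ^ (r - 1) * (p - 1)) ≡ 1 [MOD p ^ r] := by
      have := Nat.ModEq.pow_totient hgco_m
      rwa [Nat.totient_prime_pow hp (by omega)] at this
    have hdg : p ^ r ∣ g ^ (p ^ (r - 1) * (p - 1)) - 1 :=
      (Nat.modEq_iff_dvd' (Nat.one_le_pow _ _ hpos_g)).mp heg.symm
    set X := (g ^ (p ^ (r - 1) * (p - 1)) - 1) / p ^ r with hX_def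
    have hXeq : p ^ r * X = g ^ (p ^ (r - 1) * (p - 1)) - 1 := Nat.mul_div_cancel' hdg
    -- integer versions
    have hint_h : ((h : ℤ)) ^ (p ^ (r - 1) * (p - 1)) = 1 + (p : ℤ) ^ r * a := by
      have h1 : h ^ (p ^ (r - 1) * (p - 1)) = 1 + p ^ r * a := by
        have := Nat.one_le_pow (p ^ (r - 1) * (p - 1)) h hpos_h
        omega
      exact_mod_cast congrArg (Nat.cast : ℕ → ℤ) h1
    have hint_g : ((g : ℤ)) ^ (p ^ (r - 1) * (p - 1)) = 1 + (p : ℤ) ^ r * X := by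
      have h1 : g ^ (p ^ (r - 1) * (p - 1)) = 1 + p ^ r * X := by
        have := Nat.one_le_pow (p ^ (r - 1) * (p - 1)) g hpos_g
        omega
      exact_mod_cast congrArg (Nat.cast : ℕ → ℤ) h1
    have hMdvd : ((p : ℤ)) ^ (r + 1) ∣ (g : ℤ) - (h : ℤ) ^ k := by
      have h1 : ((g : ℤ)) ≡ ((h ^ k : ℕ) : ℤ) [ZMOD ((p ^ (r + 1) : ℕ) : ℤ)] :=
        Int.natCast_modEq_iff.mpr hgmod
      have h2 := h1.dvd
      push_cast at h2
      have := h2.neg_right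
      rwa [neg_sub] at this
    have h2r : ((p : ℤ)) ^ (2 * r) ∣ ((g : ℤ)) ^ p ^ (r - 1) - ((h : ℤ) ^ k) ^ p ^ (r - 1) := by
      have := aux_pow_pj p hp (s := r + 1) (by omega) (r - 1) hMdvd
      rwa [show r + 1 + (r - 1) = 2 * r from by omega] at this
    have h2r' : ((p : ℤ)) ^ (2 * r) ∣
        ((g : ℤ)) ^ (p ^ (r - 1) * (p - 1)) - (((h : ℤ)) ^ (p ^ (r - 1) * (p - 1))) ^ k := by
      have hmod : ((g : ℤ)) ^ p ^ (r - 1) ≡ ((h : ℤ) ^ k) ^ p ^ (r - 1)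
          [ZMOD ((p : ℤ)) ^ (2 * r)] := by
        apply Int.modEq_iff_dvd.mpr
        have := h2r.neg_right
        rwa [neg_sub] at this
      have hdd := (hmod.pow (p - 1)).dvd
      have e1 : (((g : ℤ)) ^ p ^ (r - 1)) ^ (p - 1) = ((g : ℤ)) ^ (p ^ (r - 1) * (p - 1)) := by
        rw [← pow_mul]
      have e2 : ((((h : ℤ)) ^ k) ^ p ^ (r - 1)) ^ (p - 1)
          = (((h : ℤ)) ^ (p ^ (r - 1) * (p - 1))) ^ k := by
        rw [← pow_mul, ← pow_mul, ← pow_mul]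
        ring_nf
      rw [e1, e2] at hdd
      have := hdd.neg_right
      rwa [neg_sub] at this
    have hAk : ((p : ℤ)) ^ (2 * r) ∣
        (((h : ℤ)) ^ (p ^ (r - 1) * (p - 1))) ^ k - (1 + (k : ℤ) * ((p : ℤ) ^ r * a)) := by
      have h1 := aux_L2 ((p : ℤ) ^ r * a) k
      rw [← hint_h] at h1
      refine dvd_trans ?_ h1
      have e : ((p : ℤ) ^ r * a) ^ 2 = (p : ℤ) ^ (2 * r) * (a : ℤ) ^ 2 := by ring
      rw [e]
      exact dvd_mul_right _ _
    have hcomb : ((p : ℤ)) ^ (2 * r) ∣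
        (1 + (p : ℤ) ^ r * X) - (1 + (k : ℤ) * ((p : ℤ) ^ r * a)) := by
      have := dvd_add h2r' hAk
      rw [← hint_g]
      have e : ((g : ℤ) ^ (p ^ (r - 1) * (p - 1)) - ((h : ℤ) ^ (p ^ (r - 1) * (p - 1))) ^ k)
          + ((((h : ℤ)) ^ (p ^ (r - 1) * (p - 1))) ^ k - (1 + (k : ℤ) * ((p : ℤ) ^ r * a)))
          = (g : ℤ) ^ (p ^ (r - 1) * (p - 1)) - (1 + (k : ℤ) * ((p : ℤ) ^ r * a)) := by ring
      rwa [e] at this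
    have hfd : ((p : ℤ)) ^ r ∣ (X : ℤ) - (k : ℤ) * a := by
      have e1 : (1 + (p : ℤ) ^ r * X) - (1 + (k : ℤ) * ((p : ℤ) ^ r * a))
          = (p : ℤ) ^ r * ((X : ℤ) - (k : ℤ) * a) := by ring
      have e2 : ((p : ℤ)) ^ (2 * r) = (p : ℤ) ^ r * (p : ℤ) ^ r := by ring
      rw [e1, e2] at hcomb
      exact (mul_dvd_mul_iff_left (by positivity : ((p : ℤ)) ^ r ≠ 0)).mp hcomb
    -- X ≡ k * a ≡ b * a ≡ 1 mod p^r
    have hX_ka : X ≡ k * a [MOD p ^ r] := by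
      apply Int.natCast_modEq_iff.mp
      apply Int.modEq_iff_dvd.mpr
      push_cast
      have := hfd.neg_right
      rwa [neg_sub] at this
    have hka_1 : k * a ≡ 1 [MOD p ^ r] := by
      calc k * a ≡ b * a [MOD p ^ r] := Nat.ModEq.mul_right a hk1
        _ = a * b := mul_comm b a
        _ ≡ 1 [MOD p ^ r] := hab
    have hX1 : X ≡ 1 [MOD p ^ r] := hX_ka.trans hka_1
    show (((g ^ (p ^ (r - 1) * (p - 1)) - 1) / p ^ r) % p ^ r) = 1
    rw [← hX_def]
    calc X % p ^ r = 1 % p ^ r := hX1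
      _ = 1 := Nat.mod_eq_of_lt hm1
end

section
/- Let p be an odd prime, r ≥ 2, v coprime to p with 0 ≤ v < p^r, and set V_v = {v, v+p^r, v+2p^r, ..., v+(p−1)p^r} ⊆ (Z/p^{r+1}Z)^*. If Q_r(v) = ℓ, then for each i with 0 ≤ i < p, the intersection of V_v with the level set D_{ℓ + i·p^{r−1} mod p^r}^{(p^{r+1})} has exactly one element. -/
/-- The fiber `V_v = {v, v + p^r, v + 2p^r, ..., v + (p-1)p^r}`. -/
def fiberSet (p r v : ℕ) : Finset ℕ :=
  (Finset.range p).image (fun k => v + k * p ^ r)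

lemma add_pow_of_sq_eq_zero {R : Type*} [CommRing R] (a b : R) (hb : b * b = 0) :
    ∀ n : ℕ, (a + b) ^ n = a ^ n + n * a ^ (n - 1) * b := by
  intro n
  induction n with
  | zero => simp
  | succ m ih =>
    match m, ih with
    | 0, _ => simp
    | (m' + 1), ih =>
      rw [pow_succ, ih]
      simp only [Nat.add_sub_cancel]
      push_cast
      linear_combination ((m' : R) + 1) * a ^ m' * hb

lemma cast_pow_mul_eq_iff (p : ℕ) (hp : p.Prime) (r : ℕ) (hr : 1 ≤ r) (x y : ℕ) :
    ((p ^ (r-1) * x : ℕ) : ZMod (p ^ r)) = ((p ^ (r-1) * y : ℕ) : ZMod (p ^ r)) ↔ x ≡ y [MOD p] := by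
  rw [ZMod.natCast_eq_natCast_iff]
  unfold Nat.ModEq
  have hpr : p ^ r = p ^ (r-1) * p := by rw [← pow_succ, Nat.sub_add_cancel hr]
  rw [hpr, Nat.mul_mod_mul_left, Nat.mul_mod_mul_left]
  constructor
  · exact fun h => Nat.eq_of_mul_eq_mul_left (pow_pos hp.pos _) h
  · exact fun h => by rw [h]

lemma eulerQuotient_add_mul (p : ℕ) (hp : p.Prime) (r : ℕ) (hr : 1 ≤ r)
    (φ : ℕ) (hφ : φ = p ^ (r - 1) * (p - 1))
    (u : ℕ) (hu : Nat.Coprime u p) (k : ℕ) :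
    (eulerQuotient p r (u + k * p ^ r) : ZMod (p ^ r)) =
      (eulerQuotient p r u : ZMod (p ^ r)) + ((φ * u ^ (φ - 1) * k : ℕ) : ZMod (p ^ r)) := by
  obtain ⟨w, hw⟩ : ∃ w, w = u + k * p ^ r := ⟨_, rfl⟩
  rw [← hw]
  have hu0 : 0 < u := by
    rcases Nat.eq_zero_or_pos u with h | h
    · subst h; rw [Nat.coprime_zero_left] at hu
      exact absurd hu hp.ne_one
    · exact h
  have hw0 : 0 < w := by omega
  have hucop : Nat.Coprime u (p ^ r) := hu.pow_right r
  have hwcop : Nat.Coprime w p := by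
    have h1 : w = u + (k * p ^ (r - 1)) * p := by
      rw [hw, mul_assoc, ← pow_succ, Nat.sub_add_cancel hr]
    rw [h1]
    exact (Nat.coprime_add_mul_right_left u p _).mpr hu
  have hwcop' : Nat.Coprime w (p ^ r) := hwcop.pow_right r
  have ht : (p ^ r).totient = φ := by rw [Nat.totient_prime_pow hp (by omega), hφ]
  have heu : u ^ φ ≡ 1 [MOD p ^ r] := by rw [← ht]; exact Nat.ModEq.pow_totient hucop
  have hew : w ^ φ ≡ 1 [MOD p ^ r] := by rw [← ht]; exact Nat.ModEq.pow_totient hwcop'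
  have hu1 : 1 ≤ u ^ φ := Nat.one_le_pow _ _ hu0
  have hw1 : 1 ≤ w ^ φ := Nat.one_le_pow _ _ hw0
  have hdu : p ^ r ∣ u ^ φ - 1 := (Nat.modEq_iff_dvd' hu1).mp heu.symm
  have hdw : p ^ r ∣ w ^ φ - 1 := (Nat.modEq_iff_dvd' hw1).mp hew.symm
  obtain ⟨a, ha⟩ := hdu
  obtain ⟨b, hb⟩ := hdw
  have hprpos : 0 < p ^ r := pow_pos hp.pos r
  have hzero : ((p : ZMod (p ^ (2 * r)))) ^ (2 * r) = 0 := by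
    have h := ZMod.natCast_self (p ^ (2 * r))
    push_cast at h
    exact h
  have hb2 : ((k * p ^ r : ℕ) : ZMod (p ^ (2 * r))) * ((k * p ^ r : ℕ) : ZMod (p ^ (2 * r))) = 0 := by
    push_cast
    linear_combination ((k : ZMod (p ^ (2 * r)))) ^ 2 * hzero
  have hmain := add_pow_of_sq_eq_zero ((u : ℕ) : ZMod (p ^ (2 * r))) ((k * p ^ r : ℕ) : ZMod (p ^ (2 * r))) hb2 φ
  have hcast : ((w ^ φ : ℕ) : ZMod (p ^ (2 * r))) = ((u ^ φ + φ * u ^ (φ - 1) * (k * p ^ r) : ℕ) : ZMod (p ^ (2 * r))) := by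
    rw [hw]
    push_cast
    push_cast at hmain
    linear_combination hmain
  have hmod : w ^ φ ≡ u ^ φ + φ * u ^ (φ - 1) * (k * p ^ r) [MOD p ^ (2 * r)] :=
    (ZMod.natCast_eq_natCast_iff _ _ _).mp hcast
  have hdvdZ : ((p ^ (2 * r) : ℕ) : ℤ) ∣ ((u ^ φ + φ * u ^ (φ - 1) * (k * p ^ r) : ℕ) : ℤ) - ((w ^ φ : ℕ) : ℤ) :=
    Nat.modEq_iff_dvd.mp hmod
  have haZ : ((u : ℤ)) ^ φ = (p : ℤ) ^ r * a + 1 := by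
    have h : (u ^ φ : ℕ) = p ^ r * a + 1 := by omega
    exact_mod_cast congrArg (Nat.cast : ℕ → ℤ) h
  have hbZ : ((w : ℤ)) ^ φ = (p : ℤ) ^ r * b + 1 := by
    have h : (w ^ φ : ℕ) = p ^ r * b + 1 := by omega
    exact_mod_cast congrArg (Nat.cast : ℕ → ℤ) h
  have hppos : ((p : ℤ)) ^ r ≠ 0 := by
    have := hp.pos
    positivity
  have hdvdZ' : (p : ℤ) ^ r ∣ ((a : ℤ) + φ * u ^ (φ - 1) * k - b) := by
    have h2 : (p : ℤ) ^ r * (p : ℤ) ^ r ∣ (p : ℤ) ^ r * ((a : ℤ) + φ * u ^ (φ - 1) * k - b) := by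
      have h3 := hdvdZ
      push_cast at h3
      rw [haZ, hbZ] at h3
      have h4 : ((p : ℤ)) ^ (2 * r) = (p : ℤ) ^ r * (p : ℤ) ^ r := by
        rw [two_mul, pow_add]
      rw [h4] at h3
      convert h3 using 1
      ring
    exact (mul_dvd_mul_iff_left hppos).mp h2
  have h0 : (((a : ℤ) + φ * u ^ (φ - 1) * k - b : ℤ) : ZMod (p ^ r)) = 0 := by
    rw [ZMod.intCast_zmod_eq_zero_iff_dvd]
    exact_mod_cast hdvdZ'
  have hqu : eulerQuotient p r u = a % p ^ r := by
    rw [eulerQuotient, ← hφ]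
    congr 1
    rw [ha]
    exact Nat.mul_div_cancel_left a hprpos
  have hqw : eulerQuotient p r w = b % p ^ r := by
    rw [eulerQuotient, ← hφ]
    congr 1
    rw [hb]
    exact Nat.mul_div_cancel_left b hprpos
  rw [hqu, hqw, ZMod.natCast_mod, ZMod.natCast_mod]
  push_cast at h0 ⊢
  linear_combination -h0

lemma eulerQuotient_fiber_formula (p : ℕ) (hp : p.Prime) (r : ℕ) (hr : 1 ≤ r)
    (v : ℕ) (hvp : Nat.Coprime v p) (ℓ : ℕ) (hℓ : eulerQuotient p r v = ℓ)
    (c : ℕ) (hc : c = (p - 1) * v ^ (p ^ (r - 1) * (p - 1) - 1)) (k : ℕ) :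
    eulerQuotient p r (v + k * p ^ r) = (ℓ + (c * k % p) * p ^ (r - 1)) % p ^ r := by
  have hprpos : 0 < p ^ r := pow_pos hp.pos r
  have h1 := eulerQuotient_add_mul p hp r hr (p ^ (r - 1) * (p - 1)) rfl v hvp k
  rw [hℓ] at h1
  have h2 : (p ^ (r - 1) * (p - 1)) * v ^ (p ^ (r - 1) * (p - 1) - 1) * k
      = p ^ (r - 1) * (c * k) := by rw [hc]; ring
  rw [h2] at h1
  have h3 : ((p ^ (r - 1) * (c * k) : ℕ) : ZMod (p ^ r))
      = ((p ^ (r - 1) * (c * k % p) : ℕ) : ZMod (p ^ r)) :=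
    (cast_pow_mul_eq_iff p hp r hr _ _).mpr (Nat.mod_modEq _ _).symm
  have h4 : ((eulerQuotient p r (v + k * p ^ r) : ℕ) : ZMod (p ^ r))
      = (((ℓ + (c * k % p) * p ^ (r - 1)) % p ^ r : ℕ) : ZMod (p ^ r)) := by
    rw [ZMod.natCast_mod, h1, h3]
    push_cast
    ring
  have h5 := (ZMod.natCast_eq_natCast_iff _ _ _).mp h4
  have hlt1 : eulerQuotient p r (v + k * p ^ r) < p ^ r := by
    rw [eulerQuotient]; exact Nat.mod_lt _ hprpos
  unfold Nat.ModEq at h5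
  rwa [Nat.mod_eq_of_lt hlt1, Nat.mod_eq_of_lt (Nat.mod_lt _ hprpos)] at h5

lemma target_inj (p : ℕ) (hp : p.Prime) (r : ℕ) (hr : 1 ≤ r) (ℓ : ℕ)
    (j₁ j₂ : ℕ) (h₁ : j₁ < p) (h₂ : j₂ < p)
    (h : (ℓ + j₁ * p ^ (r - 1)) % p ^ r = (ℓ + j₂ * p ^ (r - 1)) % p ^ r) : j₁ = j₂ := by
  have hmod : ℓ + j₁ * p ^ (r - 1) ≡ ℓ + j₂ * p ^ (r - 1) [MOD p ^ r] := h
  have hmod2 : j₁ * p ^ (r - 1) ≡ j₂ * p ^ (r - 1) [MOD p ^ r] :=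
    Nat.ModEq.add_left_cancel' ℓ hmod
  have hmod3 : ((p ^ (r - 1) * j₁ : ℕ) : ZMod (p ^ r)) = ((p ^ (r - 1) * j₂ : ℕ) : ZMod (p ^ r)) := by
    rw [ZMod.natCast_eq_natCast_iff]
    rw [mul_comm (p ^ (r - 1)) j₁, mul_comm (p ^ (r - 1)) j₂]
    exact hmod2
  have h6 := (cast_pow_mul_eq_iff p hp r hr _ _).mp hmod3
  unfold Nat.ModEq at h6
  rwa [Nat.mod_eq_of_lt h₁, Nat.mod_eq_of_lt h₂] at h6

theorem fiber_inter_levelSet_card (p : ℕ) (hp : p.Prime) (hodd : Odd p)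
    (r : ℕ) (hr : 2 ≤ r) (v : ℕ) (hv : v < p ^ r) (hvp : Nat.Coprime v p)
    (ℓ : ℕ) (hℓ : eulerQuotient p r v = ℓ)
    (i : ℕ) (hi : i < p) :
    (fiberSet p r v ∩ levelSet p r ((ℓ + i * p ^ (r - 1)) % p ^ r)).card = 1 := by
  haveI : Fact p.Prime := ⟨hp⟩
  haveI : NeZero p := ⟨hp.pos.ne'⟩
  have hr1 : 1 ≤ r := by omega
  have hprpos : 0 < p ^ r := pow_pos hp.pos r
  -- the "slope" c, coprime to p
  obtain ⟨c, hc⟩ : ∃ c, c = (p - 1) * v ^ (p ^ (r - 1) * (p - 1) - 1) := ⟨_, rfl⟩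
  have hp3 : 3 ≤ p := by
    rcases hodd with ⟨m, hm⟩
    have := hp.two_le
    omega
  have hcp : Nat.Coprime p c := by
    rw [hc]
    have h1 : Nat.Coprime p (p - 1) := hp.coprime_iff_not_dvd.mpr (fun hd => by
      have := Nat.le_of_dvd (by omega) hd; omega)
    exact h1.mul_right (hvp.symm.pow_right _)
  have hczero : (c : ZMod p) ≠ 0 := by
    rw [Ne, ZMod.natCast_eq_zero_iff]
    exact hp.coprime_iff_not_dvd.mp hcp
  obtain ⟨k₀, hk₀def⟩ : ∃ k₀, k₀ = ((i : ZMod p) * (c : ZMod p)⁻¹).val := ⟨_, rfl⟩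
  have hk₀ : k₀ < p := by rw [hk₀def]; exact ZMod.val_lt _
  have hck₀ : c * k₀ ≡ i [MOD p] := by
    have h : ((c * k₀ : ℕ) : ZMod p) = ((i : ℕ) : ZMod p) := by
      push_cast
      rw [hk₀def, ZMod.natCast_val, ZMod.cast_id]
      have h2 := mul_inv_cancel₀ hczero
      linear_combination (i : ZMod p) * h2
    exact (ZMod.natCast_eq_natCast_iff _ _ _).mp h
  have huniq : ∀ k, k < p → c * k ≡ i [MOD p] → k = k₀ := by
    intro k hk h
    have h2 : c * k ≡ c * k₀ [MOD p] := h.trans hck₀.symm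
    have h3 : k ≡ k₀ [MOD p] := Nat.ModEq.cancel_left_of_coprime hcp h2
    unfold Nat.ModEq at h3
    rwa [Nat.mod_eq_of_lt hk, Nat.mod_eq_of_lt hk₀] at h3
  have hset : fiberSet p r v ∩ levelSet p r ((ℓ + i * p ^ (r - 1)) % p ^ r)
      = {v + k₀ * p ^ r} := by
    ext x
    simp only [Finset.mem_inter, Finset.mem_singleton, fiberSet, levelSet,
      Finset.mem_image, Finset.mem_filter, Finset.mem_range]
    constructor
    · rintro ⟨⟨k, hk, rfl⟩, -, -, hqx⟩
      rw [eulerQuotient_fiber_formula p hp r hr1 v hvp ℓ hℓ c hc k] at hqx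
      have h7 : c * k % p = i := target_inj p hp r hr1 ℓ _ _ (Nat.mod_lt _ hp.pos) hi hqx
      have h8 : c * k ≡ i [MOD p] := by
        unfold Nat.ModEq; rw [h7, Nat.mod_eq_of_lt hi]
      rw [huniq k hk h8]
    · rintro rfl
      refine ⟨⟨k₀, hk₀, rfl⟩, ?_, ?_, ?_⟩
      · calc v + k₀ * p ^ r < p ^ r + k₀ * p ^ r := by omega
          _ = (k₀ + 1) * p ^ r := by ring
          _ ≤ p * p ^ r := Nat.mul_le_mul_right _ (by omega)
          _ = p ^ (r + 1) := by rw [pow_succ, mul_comm]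
      · have h1 : v + k₀ * p ^ r = v + (k₀ * p ^ (r - 1)) * p := by
          rw [mul_assoc, ← pow_succ, Nat.sub_add_cancel hr1]
        rw [h1]
        exact (Nat.coprime_add_mul_right_left v p _).mpr hvp
      · rw [eulerQuotient_fiber_formula p hp r hr1 v hvp ℓ hℓ c hc k₀]
        have h9 : c * k₀ % p = i := by
          have h10 := hck₀
          unfold Nat.ModEq at h10
          rwa [Nat.mod_eq_of_lt hi] at h10
        rw [h9]
  rw [hset]
  exact Finset.card_singleton _
end
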